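/- arXiv:1112.3450 — 6 statements merged into one kernel-verified Lean document; each statement's English description precedes it below -/
import Mathlib

section
/- For the Laplacian shrinkage estimator β̃ with residual r̃ = y − Xβ̃, one has λ₂·max_{1≤j≤q} |d_j β̃_j − a_j'β̃| ≤ n^{−1/2}‖r̃‖, and moreover ‖r̃‖ ≤ ‖y‖. In particular, λ₂·max_{1≤j≤q} d_j|β̃_j − a_j'β̃/d_j| ≤ ‖r̃‖ ≤ ‖y‖ (where the quantity d_j|β̃_j − a_j'β̃/d_j| is interpreted as |d_jβ̃_j − a_j'β̃|). -/
open Matrix Finset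

/-!
At a minimiser `β̃` of `G`, moving along the coordinate direction `e_j` changes `G` by a quadratic
polynomial in the step length; its linear coefficient must vanish, which is the normal equation
`λ₂ (Lβ̃)_j = n⁻¹ ⟪x_j, r̃⟫`. Cauchy–Schwarz and `‖x_j‖ = √n` give the first bound. The second
follows from `G β̃ ≤ G 0` because `L` is positive semidefinite: `b'Lb` is half the sum over all
pairs of `|a_jk| b_j² + |a_jk| b_k² - 2 a_jk b_j b_k ≥ 0`.
-/

theorem eq_zero_of_forall_mul_add_mul_sq_nonneg {a c : ℝ} (h : ∀ t : ℝ, 0 ≤ c * t + a * t ^ 2) :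
    c = 0 := by
  -- at `t = -c s` with `s = 1 / (|a| + 1)` the polynomial equals `c² s (a s - 1)` and `a s < 1`
  set s := 1 / (|a| + 1)
  have hs : 0 < s := by positivity
  have has : a * s < 1 := by
    rw [← div_eq_mul_one_div, div_lt_one (by positivity)]
    linarith [le_abs_self a]
  have hvalue : 0 ≤ c ^ 2 * s * (a * s - 1) := by
    have := h (-c * s)
    linarith [show c * (-c * s) + a * (-c * s) ^ 2 = c ^ 2 * s * (a * s - 1) by ring]
  have hc2 : c ^ 2 ≤ 0 := le_of_mul_le_mul_right (by nlinarith [hvalue]) hs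
  exact pow_eq_zero_iff two_ne_zero |>.1 (le_antisymm hc2 (sq_nonneg c))

theorem two_mul_mul_mul_le_abs_mul_add_sq (a x y : ℝ) :
    2 * (a * (x * y)) ≤ |a| * (x ^ 2 + y ^ 2) := by
  have h : a * (x * y) ≤ |a| * (|x| * |y|) := by
    rw [← abs_mul, ← abs_mul]
    exact le_abs_self _
  have hsq : 0 ≤ |a| * (|x| - |y|) ^ 2 := by positivity
  calc 2 * (a * (x * y)) ≤ 2 * (|a| * (|x| * |y|)) := by linarith
    _ = |a| * (|x| ^ 2 + |y| ^ 2) - |a| * (|x| - |y|) ^ 2 := by ring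
    _ ≤ |a| * (x ^ 2 + y ^ 2) := by rw [sq_abs, sq_abs]; linarith

theorem abs_sum_mul_le_sqrt_mul_sqrt {ι : Type*} (s : Finset ι) (f g : ι → ℝ) :
    |∑ i ∈ s, f i * g i| ≤ √(∑ i ∈ s, f i ^ 2) * √(∑ i ∈ s, g i ^ 2) := by
  refine abs_le.2 ⟨?_, Real.sum_mul_le_sqrt_mul_sqrt s f g⟩
  have := Real.sum_mul_le_sqrt_mul_sqrt s (fun i => -f i) g
  simp only [neg_mul, sum_neg_distrib, neg_sq] at this
  linarith

section PenalizedLeastSquares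

variable {m ι : Type*} [Fintype m] [Fintype ι]

theorem Matrix.IsSymm.dotProduct_mulVec_add_smul {R : Type*} [CommRing R] {M : Matrix ι ι R}
    (hM : M.IsSymm) (x v : ι → R) (t : R) :
    (x + t • v) ⬝ᵥ M *ᵥ (x + t • v)
      = x ⬝ᵥ M *ᵥ x + 2 * t * (v ⬝ᵥ M *ᵥ x) + t ^ 2 * (v ⬝ᵥ M *ᵥ v) := by
  have hswap : x ⬝ᵥ M *ᵥ v = v ⬝ᵥ M *ᵥ x := by
    rw [dotProduct_mulVec, dotProduct_comm, ← vecMul_transpose, hM.eq]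
  simp only [mulVec_add, mulVec_smul, dotProduct_add, add_dotProduct, dotProduct_smul,
    smul_dotProduct, smul_eq_mul, hswap]
  ring

theorem sum_sq_sub_mulVec_add_smul (y : m → ℝ) (X : Matrix m ι ℝ) (b v : ι → ℝ) (t : ℝ) :
    ∑ i, (y i - (X *ᵥ (b + t • v)) i) ^ 2
      = ∑ i, (y i - (X *ᵥ b) i) ^ 2 - 2 * t * ∑ i, (X *ᵥ v) i * (y i - (X *ᵥ b) i)
        + t ^ 2 * ∑ i, (X *ᵥ v) i ^ 2 := by
  simp only [mulVec_add, mulVec_smul, Pi.add_apply, Pi.smul_apply, smul_eq_mul, mul_sum,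
    ← sum_sub_distrib, ← sum_add_distrib]
  exact sum_congr rfl fun i _ => by ring

def penalizedLeastSquares (c₁ c₂ : ℝ) (X : Matrix m ι ℝ) (y : m → ℝ) (M : Matrix ι ι ℝ)
    (b : ι → ℝ) : ℝ :=
  c₁ * ∑ i, (y i - (X *ᵥ b) i) ^ 2 + c₂ * (b ⬝ᵥ M *ᵥ b)

theorem penalizedLeastSquares_normal_eq {c₁ c₂ : ℝ} {X : Matrix m ι ℝ} {y : m → ℝ}
    {M : Matrix ι ι ℝ} (hM : M.IsSymm) {β : ι → ℝ}
    (hmin : ∀ b, penalizedLeastSquares c₁ c₂ X y M β ≤ penalizedLeastSquares c₁ c₂ X y M b)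
    (v : ι → ℝ) :
    c₂ * (v ⬝ᵥ M *ᵥ β) = c₁ * ∑ i, (X *ᵥ v) i * (y i - (X *ᵥ β) i) := by
  suffices 2 * (c₂ * (v ⬝ᵥ M *ᵥ β) - c₁ * ∑ i, (X *ᵥ v) i * (y i - (X *ᵥ β) i)) = 0 by
    linarith
  refine eq_zero_of_forall_mul_add_mul_sq_nonneg
    (a := c₁ * ∑ i, (X *ᵥ v) i ^ 2 + c₂ * (v ⬝ᵥ M *ᵥ v)) fun t => ?_
  have := hmin (β + t • v)
  rw [penalizedLeastSquares, penalizedLeastSquares, sum_sq_sub_mulVec_add_smul,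
    hM.dotProduct_mulVec_add_smul] at this
  linarith

theorem penalizedLeastSquares_sum_sq_residual_le {c₁ c₂ : ℝ} {X : Matrix m ι ℝ} {y : m → ℝ}
    {M : Matrix ι ι ℝ} {β : ι → ℝ} (hc₁ : 0 < c₁) (hpen : 0 ≤ c₂ * (β ⬝ᵥ M *ᵥ β))
    (hmin : penalizedLeastSquares c₁ c₂ X y M β ≤ penalizedLeastSquares c₁ c₂ X y M 0) :
    ∑ i, (y i - (X *ᵥ β) i) ^ 2 ≤ ∑ i, y i ^ 2 := by
  simp only [penalizedLeastSquares, mulVec_zero, Pi.zero_apply, sub_zero, zero_dotProduct,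
    mul_zero, add_zero] at hmin
  exact le_of_mul_le_mul_left (by linarith) hc₁

end PenalizedLeastSquares

section AbsLaplacian

variable {ι : Type*} [Fintype ι] [DecidableEq ι]

def absLaplacian (A : Matrix ι ι ℝ) : Matrix ι ι ℝ :=
  diagonal (fun j => ∑ k, |A j k|) - A

theorem absLaplacian_mulVec_apply (A : Matrix ι ι ℝ) (b : ι → ℝ) (j : ι) :
    (absLaplacian A *ᵥ b) j = (∑ k, |A j k|) * b j - ∑ k, A j k * b k := by
  rw [absLaplacian, sub_mulVec, Pi.sub_apply, mulVec_diagonal]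
  rfl

theorem isSymm_absLaplacian {A : Matrix ι ι ℝ} (hA : A.IsSymm) : (absLaplacian A).IsSymm :=
  (isSymm_diagonal _).sub hA

theorem dotProduct_absLaplacian_mulVec_self_nonneg {A : Matrix ι ι ℝ} (hA : A.IsSymm)
    (b : ι → ℝ) : 0 ≤ b ⬝ᵥ absLaplacian A *ᵥ b := by
  have hrows : b ⬝ᵥ absLaplacian A *ᵥ b
      = ∑ j, ∑ k, (|A j k| * b j ^ 2 - A j k * (b j * b k)) := by
    simp only [dotProduct, absLaplacian_mulVec_apply, mul_sub, sum_mul, mul_sum,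
      ← sum_sub_distrib]
    exact sum_congr rfl fun j _ => sum_congr rfl fun k _ => by ring
  have hcols : b ⬝ᵥ absLaplacian A *ᵥ b
      = ∑ j, ∑ k, (|A j k| * b k ^ 2 - A j k * (b j * b k)) := by
    rw [hrows, sum_comm]
    exact sum_congr rfl fun j _ => sum_congr rfl fun k _ => by
      rw [hA.apply j k]
      ring
  have hpairs : 0 ≤ ∑ j, ∑ k, (|A j k| * (b j ^ 2 + b k ^ 2) - 2 * (A j k * (b j * b k))) :=
    sum_nonneg fun j _ => sum_nonneg fun k _ =>
      sub_nonneg.2 (two_mul_mul_mul_le_abs_mul_add_sq _ _ _)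
  have htwice : 2 * (b ⬝ᵥ absLaplacian A *ᵥ b)
      = ∑ j, ∑ k, (|A j k| * (b j ^ 2 + b k ^ 2) - 2 * (A j k * (b j * b k))) := by
    rw [two_mul]
    nth_rewrite 1 [hrows]
    rw [hcols, ← sum_add_distrib]
    exact sum_congr rfl fun j _ => by
      rw [← sum_add_distrib]
      exact sum_congr rfl fun k _ => by ring
  linarith

end AbsLaplacian

theorem laplacian_shrinkage_local_center_bound_general
    (n q : ℕ) (hn : 0 < n)
    (y : Fin n → ℝ) (X : Matrix (Fin n) (Fin q) ℝ)
    (hstd : ∀ j, ∑ i, (X i j)^2 = (n : ℝ))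
    (A : Matrix (Fin q) (Fin q) ℝ) (hAsymm : A.IsSymm)
    (d : Fin q → ℝ) (hd : ∀ j, d j = ∑ k, |A j k|)
    (L : Matrix (Fin q) (Fin q) ℝ) (hL : L = Matrix.diagonal d - A)
    (lam2 : ℝ) (hlam2 : 0 < lam2)
    (G : (Fin q → ℝ) → ℝ)
    (hG : ∀ b, G b = (2 * n : ℝ)⁻¹ * ∑ i, (y i - X.mulVec b i)^2
      + lam2 / 2 * (b ⬝ᵥ L.mulVec b))
    (βt : Fin q → ℝ) (hmin : ∀ b, G βt ≤ G b)
    (r : Fin n → ℝ) (hr : ∀ i, r i = y i - X.mulVec βt i) :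
    (∀ j, lam2 * |d j * βt j - ∑ k, A j k * βt k|
        ≤ Real.sqrt (∑ i, (r i)^2) / Real.sqrt n)
    ∧ Real.sqrt (∑ i, (r i)^2) ≤ Real.sqrt (∑ i, (y i)^2) := by
  obtain rfl : d = fun j => ∑ k, |A j k| := funext hd
  obtain rfl : L = absLaplacian A := hL
  obtain rfl : G = penalizedLeastSquares (2 * n : ℝ)⁻¹ (lam2 / 2) X y (absLaplacian A) :=
    funext hG
  obtain rfl : r = fun i => y i - (X *ᵥ βt) i := funext hr
  refine ⟨fun j => ?_, Real.sqrt_le_sqrt ?_⟩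
  · have hnormal := penalizedLeastSquares_normal_eq (isSymm_absLaplacian hAsymm) hmin
      (Pi.single j 1)
    simp only [single_one_dotProduct, mulVec_single_one, col_apply,
      absLaplacian_mulVec_apply, mul_inv] at hnormal
    calc lam2 * |(∑ k, |A j k|) * βt j - ∑ k, A j k * βt k|
        = (n : ℝ)⁻¹ * |∑ i, X i j * (y i - (X *ᵥ βt) i)| := by
          rw [← abs_of_pos hlam2, ← abs_of_nonneg (by positivity : (0 : ℝ) ≤ (n : ℝ)⁻¹),
            ← abs_mul, ← abs_mul]
          congr 1
          linarith
      _ ≤ (n : ℝ)⁻¹ * (√n * √(∑ i, (y i - (X *ᵥ βt) i) ^ 2)) := by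
          rw [← hstd j]
          gcongr
          exact abs_sum_mul_le_sqrt_mul_sqrt _ _ _
      _ = √(∑ i, (y i - (X *ᵥ βt) i) ^ 2) / √n := by
          rw [← mul_assoc, inv_mul_eq_div, Real.sqrt_div_self', one_div_mul_eq_div]
  · exact penalizedLeastSquares_sum_sq_residual_le (by positivity)
      (mul_nonneg (by positivity) (dotProduct_absLaplacian_mulVec_self_nonneg hAsymm βt)) (hmin 0)

/-- **Proposition 1(i) of Huang, Ma, Li, Zhang (2011).**
For the Laplacian shrinkage estimator `β̃` with residual `r̃ = y − Xβ̃`,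
`λ₂ · max_j |d_j β̃_j − a_j'β̃| ≤ n^{−1/2}‖r̃‖` and `‖r̃‖ ≤ ‖y‖`. -/
theorem laplacian_shrinkage_local_center_bound
    (n q : ℕ) (hn : 0 < n) (hq : 0 < q)
    (y : Fin n → ℝ) (X : Matrix (Fin n) (Fin q) ℝ)
    (hstd : ∀ j, ∑ i, (X i j)^2 = (n : ℝ))
    (A : Matrix (Fin q) (Fin q) ℝ) (hAsymm : A.IsSymm) (hAdiag : ∀ j, 0 ≤ A j j)
    (d : Fin q → ℝ) (hd : ∀ j, d j = ∑ k, |A j k|)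
    (L : Matrix (Fin q) (Fin q) ℝ) (hL : L = Matrix.diagonal d - A)
    (lam2 : ℝ) (hlam2 : 0 < lam2)
    (G : (Fin q → ℝ) → ℝ)
    (hG : ∀ b, G b = (2 * n : ℝ)⁻¹ * ∑ i, (y i - X.mulVec b i)^2
      + lam2 / 2 * (b ⬝ᵥ L.mulVec b))
    (βt : Fin q → ℝ) (hmin : ∀ b, G βt ≤ G b)
    (r : Fin n → ℝ) (hr : ∀ i, r i = y i - X.mulVec βt i) :
    (∀ j, lam2 * |d j * βt j - ∑ k, A j k * βt k|
        ≤ Real.sqrt (∑ i, (r i)^2) / Real.sqrt n)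
    ∧ Real.sqrt (∑ i, (r i)^2) ≤ Real.sqrt (∑ i, (y i)^2) :=
  laplacian_shrinkage_local_center_bound_general n q hn y X hstd A hAsymm d hd L hL lam2 hlam2 G hG
    βt hmin r hr
end

section
/- Suppose the error vector e has mean zero and covariance matrix σ²I_n, Σ_O is positive definite, L_O is positive semidefinite, λ₂ > 0, and the Laplacian is unbiased in the sense that L_O β°_O = 0. Then the oracle Laplacian shrinkage estimator satisfies E‖β̂°_O(λ₂) − β°_O‖² = (σ²/n)·trace(Σ_O(λ₂)⁻¹ Σ_O Σ_O(λ₂)⁻¹), while the restricted least squares estimator (λ₂ = 0) satisfies E‖β̂°_O(0) − β°_O‖² = (σ²/n)·trace(Σ_O⁻¹); moreover E‖β̂°_O(λ₂) − β°_O‖² ≤ E‖β̂°_O(0) − β°_O‖², with strict inequality whenever L_O ≠ 0. That is, an unbiased Laplacian reduces variance without incurring any bias. -/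
open MeasureTheory Matrix Finset

/-!
Write `A = Σ_O + λ₂ L_O`. Unbiasedness gives `A β°_O = Σ_O β°_O`, so the error of
`A⁻¹ X_O'y / n` is exactly the noise term `A⁻¹ X_O'e / n`, whose mean squared norm under
covariance `σ² I` is `(σ²/n) tr(A⁻¹ Σ_O A⁻¹)`. The comparison with `λ₂ = 0` comes from
`Σ_O⁻¹ - A⁻¹ Σ_O A⁻¹ = A⁻¹ (2λ₂ L_O + λ₂² L_O Σ_O⁻¹ L_O) A⁻¹ ⪰ 0`, a positive semidefinite
matrix with positive trace as soon as `L_O ≠ 0`.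
-/

namespace Matrix

variable {ι : Type*} [Fintype ι] [DecidableEq ι]

theorem inv_sub_inv_mul_mul_inv {R : Type*} [CommRing R] {A : Matrix ι ι R}
    (hA : IsUnit A.det) (S : Matrix ι ι R) :
    S⁻¹ - A⁻¹ * S * A⁻¹ = A⁻¹ * (A * S⁻¹ * A - S) * A⁻¹ := by
  rw [Matrix.mul_sub, Matrix.sub_mul]
  congr 1
  simp only [← Matrix.mul_assoc, nonsing_inv_mul _ hA, Matrix.one_mul]
  simp only [Matrix.mul_assoc, mul_nonsing_inv _ hA, Matrix.mul_one]

theorem add_smul_mul_inv_mul_add_smul_sub {R : Type*} [CommRing R] {S : Matrix ι ι R}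
    (L : Matrix ι ι R) (t : R) (hS : IsUnit S.det) :
    (S + t • L) * S⁻¹ * (S + t • L) - S = (2 * t) • L + t ^ 2 • (L * S⁻¹ * L) := by
  simp only [Matrix.add_mul, Matrix.mul_add, Matrix.smul_mul, Matrix.mul_smul,
    mul_nonsing_inv _ hS, Matrix.one_mul, Matrix.mul_assoc, nonsing_inv_mul _ hS, Matrix.mul_one]
  module

omit [DecidableEq ι] in
theorem PosSemidef.trace_pos_of_ne_zero {A : Matrix ι ι ℝ} (hA : A.PosSemidef) (h : A ≠ 0) :
    0 < A.trace :=
  hA.trace_nonneg.lt_of_ne' (hA.trace_eq_zero_iff.not.mpr h)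

variable {S L : Matrix ι ι ℝ} {t : ℝ}

theorem posSemidef_mul_inv_mul (hS : S.PosDef) (hL : L.PosSemidef) :
    (L * S⁻¹ * L).PosSemidef := by
  simpa only [hL.isHermitian.eq] using hS.inv.posSemidef.mul_mul_conjTranspose_same L

theorem posSemidef_inv_sub_inv_mul_mul_inv (hS : S.PosDef) (hL : L.PosSemidef) (ht : 0 ≤ t) :
    (S⁻¹ - (S + t • L)⁻¹ * S * (S + t • L)⁻¹).PosSemidef := by
  have hA : (S + t • L).PosDef := hS.add_posSemidef (hL.smul ht)
  have hD : ((2 * t) • L + t ^ 2 • (L * S⁻¹ * L)).PosSemidef :=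
    (hL.smul (by positivity)).add ((posSemidef_mul_inv_mul hS hL).smul (by positivity))
  rw [inv_sub_inv_mul_mul_inv hA.det_pos.ne'.isUnit,
    add_smul_mul_inv_mul_add_smul_sub L t hS.det_pos.ne'.isUnit]
  simpa only [hA.inv.isHermitian.eq] using hD.mul_mul_conjTranspose_same (S + t • L)⁻¹

theorem trace_inv_mul_mul_inv_le (hS : S.PosDef) (hL : L.PosSemidef) (ht : 0 ≤ t) :
    ((S + t • L)⁻¹ * S * (S + t • L)⁻¹).trace ≤ S⁻¹.trace := by
  have := (posSemidef_inv_sub_inv_mul_mul_inv hS hL ht).trace_nonneg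
  rw [trace_sub] at this
  linarith

theorem trace_inv_mul_mul_inv_lt (hS : S.PosDef) (hL : L.PosSemidef) (ht : 0 < t)
    (hL0 : L ≠ 0) : ((S + t • L)⁻¹ * S * (S + t • L)⁻¹).trace < S⁻¹.trace := by
  set A := S + t • L
  have hA : A.PosDef := hS.add_posSemidef (hL.smul ht.le)
  have hD : A * S⁻¹ * A - S ≠ 0 := by
    rw [add_smul_mul_inv_mul_add_smul_sub L t hS.det_pos.ne'.isUnit]
    intro h0
    have htr := congrArg trace h0
    rw [trace_add, trace_smul, trace_smul, trace_zero, smul_eq_mul, smul_eq_mul] at htr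
    nlinarith [hL.trace_pos_of_ne_zero hL0, (posSemidef_mul_inv_mul hS hL).trace_nonneg]
  have hne : S⁻¹ - A⁻¹ * S * A⁻¹ ≠ 0 := by
    rwa [inv_sub_inv_mul_mul_inv hA.det_pos.ne'.isUnit, ne_eq, hA.inv.isUnit.mul_left_eq_zero,
      hA.inv.isUnit.mul_right_eq_zero]
  have := (posSemidef_inv_sub_inv_mul_mul_inv hS hL ht.le).trace_pos_of_ne_zero hne
  rw [trace_sub] at this
  linarith

omit [DecidableEq ι] in
theorem mulVec_eq_submatrix_mulVec_of_support_subset {m R : Type*} [NonUnitalNonAssocSemiring R]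
    (X : Matrix m ι R) {s : Finset ι} {v : ι → R} (hv : Function.support v ⊆ s) :
    X *ᵥ v = X.submatrix id ((↑) : s → ι) *ᵥ fun k => v k := by
  ext i
  simp only [mulVec, dotProduct, submatrix_apply, id]
  rw [Finset.sum_coe_sort s fun j => X i j * v j]
  refine (Finset.sum_subset (Finset.subset_univ s) fun j _ hj => ?_).symm
  rw [Function.notMem_support.mp fun h => hj (hv h), mul_zero]

theorem inv_mulVec_smul_transpose_mulVec_sub {m R : Type*} [Fintype m] [CommRing R]
    (X : Matrix m ι R) (r : R) {A : Matrix ι ι R} (hA : IsUnit A.det) {c : ι → R}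
    (hAc : A *ᵥ c = (r • (Xᵀ * X)) *ᵥ c) (v : m → R) :
    A⁻¹ *ᵥ (r • (Xᵀ *ᵥ (X *ᵥ c + v))) - c = (r • (A⁻¹ * Xᵀ)) *ᵥ v := by
  rw [mulVec_add, smul_add, ← smul_mulVec, mulVec_mulVec, Matrix.smul_mul, ← hAc, mulVec_add,
    mulVec_mulVec, nonsing_inv_mul _ hA, one_mulVec, add_sub_cancel_left, ← smul_mulVec,
    mulVec_mulVec, Matrix.mul_smul]

omit [DecidableEq ι] in
theorem sum_sq_mulVec {m : Type*} [Fintype m] (M : Matrix m ι ℝ) (v : ι → ℝ) :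
    ∑ j, (M *ᵥ v) j ^ 2 = ∑ i, ∑ i', (Mᵀ * M) i i' * (v i * v i') := by
  simp only [mulVec, dotProduct, sq, mul_apply, transpose_apply, Finset.sum_mul, Finset.mul_sum]
  rw [Finset.sum_comm]
  refine Finset.sum_congr rfl fun i _ => ?_
  rw [Finset.sum_comm]
  exact Finset.sum_congr rfl fun i' _ => Finset.sum_congr rfl fun j _ => by ring

end Matrix

section Moments
variable {Ω m : Type*} [MeasurableSpace Ω] {P : Measure Ω} [Fintype m] [DecidableEq m]
  {e : Ω → m → ℝ} {σ : ℝ}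

theorem integral_sum_sum_mul_mul_eq_trace
    (hint2 : ∀ i i', Integrable (fun ω => e ω i * e ω i') P)
    (hcov : ∀ i i', ∫ ω, e ω i * e ω i' ∂P = if i = i' then σ ^ 2 else 0) (B : Matrix m m ℝ) :
    ∫ ω, ∑ i, ∑ i', B i i' * (e ω i * e ω i') ∂P = σ ^ 2 * B.trace := by
  have hint : ∀ i i', Integrable (fun ω => B i i' * (e ω i * e ω i')) P :=
    fun i i' => (hint2 i i').const_mul _
  calc ∫ ω, ∑ i, ∑ i', B i i' * (e ω i * e ω i') ∂P
      = ∑ i, ∑ i', B i i' * ∫ ω, e ω i * e ω i' ∂P := by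
        rw [integral_finsetSum _ fun i _ => integrable_finsetSum _ fun i' _ => hint i i']
        refine Finset.sum_congr rfl fun i _ => ?_
        rw [integral_finsetSum _ fun i' _ => hint i i']
        simp only [integral_const_mul]
    _ = σ ^ 2 * B.trace := by
        simp only [hcov, mul_ite, mul_zero, Finset.sum_ite_eq, Finset.mem_univ, if_true, trace,
          diag_apply, Finset.mul_sum, mul_comm]

theorem integral_sum_sq_mulVec {ι : Type*} [Fintype ι]
    (hint2 : ∀ i i', Integrable (fun ω => e ω i * e ω i') P)
    (hcov : ∀ i i', ∫ ω, e ω i * e ω i' ∂P = if i = i' then σ ^ 2 else 0) (M : Matrix ι m ℝ) :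
    ∫ ω, ∑ j, (M *ᵥ e ω) j ^ 2 ∂P = σ ^ 2 * (M * Mᵀ).trace := by
  simp_rw [sum_sq_mulVec]
  rw [integral_sum_sum_mul_mul_eq_trace hint2 hcov, trace_mul_comm]

theorem integral_sum_sq_inv_mulVec_sub {ι : Type*} [Fintype ι] [DecidableEq ι]
    (hint2 : ∀ i i', Integrable (fun ω => e ω i * e ω i') P)
    (hcov : ∀ i i', ∫ ω, e ω i * e ω i' ∂P = if i = i' then σ ^ 2 else 0)
    (X : Matrix m ι ℝ) (r : ℝ) {A : Matrix ι ι ℝ} (hA : A.IsSymm) (hAdet : IsUnit A.det)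
    {c : ι → ℝ} (hAc : A *ᵥ c = (r • (Xᵀ * X)) *ᵥ c) :
    ∫ ω, ∑ j, ((A⁻¹ *ᵥ (r • (Xᵀ *ᵥ (X *ᵥ c + e ω)))) j - c j) ^ 2 ∂P
      = σ ^ 2 * r * (A⁻¹ * (r • (Xᵀ * X)) * A⁻¹).trace := by
  simp_rw [← Pi.sub_apply, inv_mulVec_smul_transpose_mulVec_sub X r hAdet hAc]
  rw [integral_sum_sq_mulVec hint2 hcov, transpose_smul, transpose_mul, transpose_transpose,
    hA.inv.eq]
  simp only [Matrix.smul_mul, Matrix.mul_smul, trace_smul, Matrix.mul_assoc, smul_eq_mul]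
  ring

end Moments

theorem integral_sum_sq_oracle_estimator_sub {Ω : Type*} [MeasurableSpace Ω] {P : Measure Ω}
    {n p : ℕ} {e y : Ω → Fin n → ℝ} {σ : ℝ}
    (hint2 : ∀ i i', Integrable (fun ω => e ω i * e ω i') P)
    (hcov : ∀ i i', ∫ ω, e ω i * e ω i' ∂P = if i = i' then σ ^ 2 else 0)
    {X : Matrix (Fin n) (Fin p) ℝ} {β : Fin p → ℝ} {O : Finset (Fin p)}
    (hβ : Function.support β ⊆ O) (hy : ∀ ω, y ω = X *ᵥ β + e ω)
    {S A : Matrix O O ℝ} (hS : S = ((n : ℝ)⁻¹ • (Xᵀ * X)).submatrix (↑) (↑)) (hA : A.PosDef)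
    (hAc : A *ᵥ (fun k => β k) = S *ᵥ (fun k => β k)) :
    ∫ ω, ∑ j : O, ((A⁻¹ *ᵥ fun k => (∑ i, X i k.1 * y ω i) / n) j - β j) ^ 2 ∂P
      = σ ^ 2 / n * (A⁻¹ * S * A⁻¹).trace := by
  set XO := X.submatrix id ((↑) : O → Fin p)
  have hS' : S = (n : ℝ)⁻¹ • (XOᵀ * XO) := by
    ext j k
    simp [hS, mul_apply, XO]
  have hestimator : ∀ ω, (fun k : O => (∑ i, X i k.1 * y ω i) / n)
      = (n : ℝ)⁻¹ • (XOᵀ *ᵥ (XO *ᵥ (fun k => β k) + e ω)) := by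
    intro ω
    rw [← mulVec_eq_submatrix_mulVec_of_support_subset X hβ, ← hy]
    ext k
    simp [mulVec, dotProduct, div_eq_inv_mul, XO]
  rw [hS'] at hAc ⊢
  simp_rw [hestimator]
  rw [integral_sum_sq_inv_mulVec_sub hint2 hcov XO _ (isHermitian_iff_isSymm.mp hA.isHermitian)
    hA.det_pos.ne'.isUnit hAc, div_eq_mul_inv]

theorem oracle_laplacian_shrinkage_variance_reduction_general
    (n p : ℕ) (hn : 0 < n)
    (X : Matrix (Fin n) (Fin p) ℝ) (βo : Fin p → ℝ)
    (O : Finset (Fin p)) (hO : ∀ j, j ∈ O ↔ βo j ≠ 0)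
    (L : Matrix (Fin p) (Fin p) ℝ) (hLpsd : L.PosSemidef)
    (lam2 : ℝ) (hlam2 : 0 < lam2)
    (Sm : Matrix (Fin p) (Fin p) ℝ) (hSm : Sm = (n : ℝ)⁻¹ • (Xᵀ * X))
    (SO LO : Matrix {j : Fin p // j ∈ O} {j : Fin p // j ∈ O} ℝ)
    (hSO : ∀ j k, SO j k = Sm j.1 k.1) (hLO : ∀ j k, LO j k = L j.1 k.1)
    (hSOpd : SO.PosDef)
    -- unbiasedness of the Laplacian
    (hunbiased : LO.mulVec (fun k => βo k.1) = 0)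
    -- probability space; error with mean zero and covariance σ²Iₙ
    (Ω : Type) [MeasurableSpace Ω] (P : Measure Ω)
    (σ : ℝ) (hσ : 0 < σ)
    (e : Ω → Fin n → ℝ)
    (hint2 : ∀ i i', Integrable (fun ω => e ω i * e ω i') P)
    (hcov : ∀ i i', (∫ ω, e ω i * e ω i' ∂P) = if i = i' then σ^2 else 0)
    (y : Ω → Fin n → ℝ) (hy : ∀ ω i, y ω i = X.mulVec βo i + e ω i)
    -- oracle estimators at penalty level λ₂ and at 0 (restricted least squares)
    (βorL βor0 : Ω → {j : Fin p // j ∈ O} → ℝ)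
    (hβorL : ∀ ω, βorL ω = (SO + lam2 • LO)⁻¹.mulVec
      (fun k => (∑ i, X i k.1 * y ω i) / n))
    (hβor0 : ∀ ω, βor0 ω = SO⁻¹.mulVec (fun k => (∑ i, X i k.1 * y ω i) / n)) :
    (∫ ω, ∑ j : {j : Fin p // j ∈ O}, (βorL ω j - βo j.1)^2 ∂P)
        = σ^2 / n * ((SO + lam2 • LO)⁻¹ * SO * (SO + lam2 • LO)⁻¹).trace
    ∧ (∫ ω, ∑ j : {j : Fin p // j ∈ O}, (βor0 ω j - βo j.1)^2 ∂P)
        = σ^2 / n * (SO⁻¹).trace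
    ∧ (∫ ω, ∑ j : {j : Fin p // j ∈ O}, (βorL ω j - βo j.1)^2 ∂P)
        ≤ (∫ ω, ∑ j : {j : Fin p // j ∈ O}, (βor0 ω j - βo j.1)^2 ∂P)
    ∧ (LO ≠ 0 →
        (∫ ω, ∑ j : {j : Fin p // j ∈ O}, (βorL ω j - βo j.1)^2 ∂P)
          < (∫ ω, ∑ j : {j : Fin p // j ∈ O}, (βor0 ω j - βo j.1)^2 ∂P)) := by
  have hS : SO = ((n : ℝ)⁻¹ • (Xᵀ * X)).submatrix (↑) (↑) := hSm ▸ Matrix.ext hSO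
  have hLOpsd : LO.PosSemidef := (Matrix.ext hLO : LO = L.submatrix (↑) (↑)) ▸ hLpsd.submatrix _
  have hrisk := fun A hA hAc => integral_sum_sq_oracle_estimator_sub (A := A) hint2 hcov
    (fun j hj => (hO j).mpr hj) (fun ω => funext (hy ω)) hS hA hAc
  have hriskL : ∫ ω, ∑ j : O, (βorL ω j - βo j.1) ^ 2 ∂P
      = σ ^ 2 / n * ((SO + lam2 • LO)⁻¹ * SO * (SO + lam2 • LO)⁻¹).trace := by
    simp_rw [hβorL]
    exact hrisk _ (hSOpd.add_posSemidef (hLOpsd.smul hlam2.le))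
      (by rw [add_mulVec, smul_mulVec, hunbiased, smul_zero, add_zero])
  have hrisk0 : ∫ ω, ∑ j : O, (βor0 ω j - βo j.1) ^ 2 ∂P = σ ^ 2 / n * (SO⁻¹).trace := by
    simp_rw [hβor0]
    rw [hrisk SO hSOpd rfl, Matrix.mul_assoc, mul_nonsing_inv _ hSOpd.det_pos.ne'.isUnit,
      Matrix.mul_one]
  have hcoef : 0 < σ ^ 2 / n := by positivity
  refine ⟨hriskL, hrisk0, ?_, fun hLO0 => ?_⟩
  · rw [hriskL, hrisk0]
    exact mul_le_mul_of_nonneg_left (trace_inv_mul_mul_inv_le hSOpd hLOpsd hlam2.le) hcoef.le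
  · rw [hriskL, hrisk0]
    exact mul_lt_mul_of_pos_left (trace_inv_mul_mul_inv_lt hSOpd hLOpsd hlam2 hLO0) hcoef

/-- **Variance reduction by an unbiased Laplacian** (Section 4.3 of Huang, Ma,
Li, Zhang (2011)). With mean-zero errors with covariance `σ²Iₙ` and an unbiased
Laplacian (`L_O β°_O = 0`), the oracle Laplacian shrinkage estimator satisfies
`E‖β̂°_O(λ₂) − β°_O‖² = (σ²/n)·tr(Σ_O(λ₂)⁻¹Σ_O Σ_O(λ₂)⁻¹)`, the restricted least
squares estimator satisfies `E‖β̂°_O(0) − β°_O‖² = (σ²/n)·tr(Σ_O⁻¹)`, and the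
former is at most the latter, strictly smaller whenever `L_O ≠ 0`. -/
theorem oracle_laplacian_shrinkage_variance_reduction
    (n p : ℕ) (hn : 0 < n)
    (X : Matrix (Fin n) (Fin p) ℝ) (βo : Fin p → ℝ)
    (O : Finset (Fin p)) (hO : ∀ j, j ∈ O ↔ βo j ≠ 0) (hOne : O.Nonempty)
    (L : Matrix (Fin p) (Fin p) ℝ) (hLpsd : L.PosSemidef)
    (lam2 : ℝ) (hlam2 : 0 < lam2)
    (Sm : Matrix (Fin p) (Fin p) ℝ) (hSm : Sm = (n : ℝ)⁻¹ • (Xᵀ * X))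
    (SO LO : Matrix {j : Fin p // j ∈ O} {j : Fin p // j ∈ O} ℝ)
    (hSO : ∀ j k, SO j k = Sm j.1 k.1) (hLO : ∀ j k, LO j k = L j.1 k.1)
    (hSOpd : SO.PosDef)
    -- unbiasedness of the Laplacian
    (hunbiased : LO.mulVec (fun k => βo k.1) = 0)
    -- probability space; error with mean zero and covariance σ²Iₙ
    (Ω : Type) [MeasurableSpace Ω] (P : Measure Ω) [IsProbabilityMeasure P]
    (σ : ℝ) (hσ : 0 < σ)
    (e : Ω → Fin n → ℝ)
    (hint : ∀ i, Integrable (fun ω => e ω i) P)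
    (hint2 : ∀ i i', Integrable (fun ω => e ω i * e ω i') P)
    (hmean : ∀ i, ∫ ω, e ω i ∂P = 0)
    (hcov : ∀ i i', (∫ ω, e ω i * e ω i' ∂P) = if i = i' then σ^2 else 0)
    (y : Ω → Fin n → ℝ) (hy : ∀ ω i, y ω i = X.mulVec βo i + e ω i)
    -- oracle estimators at penalty level λ₂ and at 0 (restricted least squares)
    (βorL βor0 : Ω → {j : Fin p // j ∈ O} → ℝ)
    (hβorL : ∀ ω, βorL ω = (SO + lam2 • LO)⁻¹.mulVec
      (fun k => (∑ i, X i k.1 * y ω i) / n))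
    (hβor0 : ∀ ω, βor0 ω = SO⁻¹.mulVec (fun k => (∑ i, X i k.1 * y ω i) / n)) :
    (∫ ω, ∑ j : {j : Fin p // j ∈ O}, (βorL ω j - βo j.1)^2 ∂P)
        = σ^2 / n * ((SO + lam2 • LO)⁻¹ * SO * (SO + lam2 • LO)⁻¹).trace
    ∧ (∫ ω, ∑ j : {j : Fin p // j ∈ O}, (βor0 ω j - βo j.1)^2 ∂P)
        = σ^2 / n * (SO⁻¹).trace
    ∧ (∫ ω, ∑ j : {j : Fin p // j ∈ O}, (βorL ω j - βo j.1)^2 ∂P)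
        ≤ (∫ ω, ∑ j : {j : Fin p // j ∈ O}, (βor0 ω j - βo j.1)^2 ∂P)
    ∧ (LO ≠ 0 →
        (∫ ω, ∑ j : {j : Fin p // j ∈ O}, (βorL ω j - βo j.1)^2 ∂P)
          < (∫ ω, ∑ j : {j : Fin p // j ∈ O}, (βor0 ω j - βo j.1)^2 ∂P)) :=
  oracle_laplacian_shrinkage_variance_reduction_general n p hn X βo O hO L hLpsd lam2 hlam2 Sm hSm
    SO LO hSO hLO hSOpd hunbiased Ω P σ hσ e hint2 hcov y hy βorL βor0 hβorL hβor0
end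

section
/- Suppose the smallest eigenvalue c_min(λ₂) of Σ + λ₂L satisfies c_min(λ₂) > 1/γ (so the SLS criterion M is strictly convex), Σ_O(λ₂) is invertible, and let β̂° be the oracle Laplacian shrinkage estimator. If (a) |x_j'(y − Xβ̂°)/n − λ₂(Lβ̂°)_j| ≤ λ₁ for every j ∉ O, and (b) sgn(β*_j)·β̂°_j ≥ γλ₁ for every j ∈ O (with β*_j ≠ 0 for j ∈ O), then β̂° is the unique global minimizer of M; in particular the SLS estimator equals β̂° and its support is exactly O. -/
/-!
Write `b = β̂° + h`. The smooth part of `M` is quadratic, so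
`M b - M β̂° = ½ h'(Σ + λ₂L)h + ∑ⱼ (ρ(β̂°ⱼ + hⱼ) - ρ(β̂°ⱼ) - hⱼ gⱼ)`, where `g` is the negative
gradient of the smooth part at `β̂°`. The normal equations of the oracle give `gⱼ = 0` on `O`,
where `|β̂°ⱼ| ≥ γλ₁` puts `β̂°ⱼ` on the flat part of the MCP; off `O`, `β̂°ⱼ = 0` and
`|gⱼ| ≤ λ₁`. In both cases the closed form `ρ(t) = γλ₁²/2 - ((γλ₁ - |t|)₊)²/(2γ)` bounds the
`j`-th summand below by `-hⱼ²/(2γ)`, so `M b - M β̂° ≥ ½ (c_min(λ₂) - 1/γ) ‖h‖² > 0`.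
-/

open Matrix Finset

theorem integral_max_one_sub_div_of_le {c t : ℝ} (hc : 0 < c) (ht0 : 0 ≤ t) (htc : t ≤ c) :
    ∫ x in (0:ℝ)..t, max (1 - x / c) 0 = t - t ^ 2 / (2 * c) := by
  have hpos : ∀ x ∈ Set.uIcc 0 t, max (1 - x / c) 0 = 1 - x / c := fun x hx => by
    rw [Set.uIcc_of_le ht0] at hx
    exact max_eq_left (by rw [sub_nonneg, div_le_one hc]; exact hx.2.trans htc)
  rw [intervalIntegral.integral_congr hpos, intervalIntegral.integral_sub intervalIntegrable_const
    (intervalIntegral.intervalIntegrable_id.div_const c)]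
  simp only [intervalIntegral.integral_const, intervalIntegral.integral_div, integral_id,
    sub_zero, smul_eq_mul, mul_one]
  field_simp
  ring

theorem integral_max_one_sub_div_of_ge {c t : ℝ} (hc : 0 < c) (hct : c ≤ t) :
    ∫ x in (0:ℝ)..t, max (1 - x / c) 0 = c / 2 := by
  have hcont : Continuous fun x : ℝ => max (1 - x / c) 0 := by fun_prop
  have hzero : ∀ x ∈ Set.uIcc c t, max (1 - x / c) 0 = 0 := fun x hx => by
    rw [Set.uIcc_of_le hct] at hx
    exact max_eq_right (by rw [sub_nonpos, le_div_iff₀ hc]; linarith [hx.1])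
  rw [← intervalIntegral.integral_add_adjacent_intervals (b := c)
      (hcont.intervalIntegrable _ _) (hcont.intervalIntegrable _ _),
    integral_max_one_sub_div_of_le hc hc.le le_rfl, intervalIntegral.integral_congr hzero,
    intervalIntegral.integral_zero, add_zero]
  field_simp
  ring

noncomputable def mcp (lam γ t : ℝ) : ℝ :=
  lam * ∫ x in (0:ℝ)..|t|, max (1 - x / (γ * lam)) 0

section mcp

variable {lam γ : ℝ}

theorem mcp_eq (hlam : 0 < lam) (hγ : 0 < γ) (t : ℝ) :
    mcp lam γ t = γ * lam ^ 2 / 2 - max (γ * lam - |t|) 0 ^ 2 / (2 * γ) := by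
  have hγlam : 0 < γ * lam := mul_pos hγ hlam
  rcases le_total |t| (γ * lam) with ht | ht
  · rw [mcp, integral_max_one_sub_div_of_le hγlam (abs_nonneg t) ht, max_eq_left (by linarith)]
    field_simp
    ring
  · rw [mcp, integral_max_one_sub_div_of_ge hγlam ht, max_eq_right (by linarith)]
    ring

theorem mcp_zero (hlam : 0 < lam) (hγ : 0 < γ) : mcp lam γ 0 = 0 := by
  rw [mcp_eq hlam hγ, abs_zero, sub_zero, max_eq_left (mul_pos hγ hlam).le]
  field_simp
  ring

theorem neg_sq_div_le_mcp_add_sub_of_le_abs (hlam : 0 < lam) (hγ : 0 < γ) {a : ℝ}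
    (ha : γ * lam ≤ |a|) (h : ℝ) :
    -(h ^ 2 / (2 * γ)) ≤ mcp lam γ (a + h) - mcp lam γ a := by
  have hgap : max (γ * lam - |a + h|) 0 ≤ |h| := by
    refine max_le ?_ (abs_nonneg h)
    have : |a| ≤ |a + h| + |h| := by simpa using abs_sub (a + h) h
    linarith
  have hsq : max (γ * lam - |a + h|) 0 ^ 2 ≤ h ^ 2 := by
    rw [← sq_abs h]; exact pow_le_pow_left₀ (le_max_right _ _) hgap 2
  rw [mcp_eq hlam hγ, mcp_eq hlam hγ, max_eq_right (by linarith : γ * lam - |a| ≤ 0)]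
  have := div_le_div_of_nonneg_right hsq (by linarith : (0:ℝ) ≤ 2 * γ)
  linarith [show (0:ℝ) ^ 2 / (2 * γ) = 0 by simp]

theorem neg_sq_div_le_mcp_sub_mul (hlam : 0 < lam) (hγ : 0 < γ) {g : ℝ} (hg : |g| ≤ lam)
    (h : ℝ) : -(h ^ 2 / (2 * γ)) ≤ mcp lam γ h - h * g := by
  have hsq : max (γ * lam - |h|) 0 ^ 2 ≤ (|h| - γ * lam) ^ 2 := by
    rcases le_total (γ * lam - |h|) 0 with hle | hle
    · rw [max_eq_right hle]; simpa using sq_nonneg _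
    · rw [max_eq_left hle]; nlinarith
  have hhg : h * g ≤ lam * |h| := by
    calc h * g ≤ |h| * |g| := by rw [← abs_mul]; exact le_abs_self _
      _ ≤ |h| * lam := by gcongr
      _ = lam * |h| := mul_comm _ _
  have key : (|h| - γ * lam) ^ 2 / (2 * γ) = γ * lam ^ 2 / 2 - lam * |h| + h ^ 2 / (2 * γ) := by
    rw [← sq_abs h]; field_simp; ring
  have := div_le_div_of_nonneg_right hsq (by linarith : (0:ℝ) ≤ 2 * γ)
  rw [mcp_eq hlam hγ]
  linarith

end mcp

section Quadratic

variable {m ι : Type*} [Fintype m] [Fintype ι]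

theorem sum_sq_sub_mulVec_add (y : m → ℝ) (X : Matrix m ι ℝ) (β h : ι → ℝ) :
    ∑ i, (y i - (X *ᵥ (β + h)) i) ^ 2 = ∑ i, (y i - (X *ᵥ β) i) ^ 2
      - 2 * (h ⬝ᵥ Xᵀ *ᵥ (y - X *ᵥ β)) + h ⬝ᵥ (Xᵀ * X) *ᵥ h := by
  set r := y - X *ᵥ β
  have hsq : ∀ v : m → ℝ, ∑ i, v i ^ 2 = v ⬝ᵥ v := fun v => by simp [dotProduct, sq]
  have hres : (fun i => y i - (X *ᵥ (β + h)) i) = r - X *ᵥ h := by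
    ext i; simp only [r, mulVec_add, Pi.add_apply, Pi.sub_apply]; ring
  rw [hsq, hsq, hres, show (fun i => y i - (X *ᵥ β) i) = r from rfl, ← mulVec_mulVec,
    dotProduct_mulVec h Xᵀ, dotProduct_mulVec h, vecMul_transpose]
  simp only [sub_dotProduct, dotProduct_sub, dotProduct_comm r (X *ᵥ h)]
  ring

theorem dotProduct_mulVec_add_of_transpose_eq {L : Matrix ι ι ℝ} (hL : Lᵀ = L) (β h : ι → ℝ) :
    (β + h) ⬝ᵥ L *ᵥ (β + h) = β ⬝ᵥ L *ᵥ β + 2 * (h ⬝ᵥ L *ᵥ β) + h ⬝ᵥ L *ᵥ h := by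
  have hsymm : β ⬝ᵥ L *ᵥ h = h ⬝ᵥ L *ᵥ β := by
    rw [dotProduct_mulVec, ← mulVec_transpose, hL, dotProduct_comm]
  simp only [mulVec_add, dotProduct_add, add_dotProduct, hsymm]
  ring

end Quadratic

theorem mulVec_submatrix_val_of_eq_zero {ι R : Type*} [Fintype ι] [NonUnitalNonAssocSemiring R]
    {Q : Matrix ι ι R} {O : Finset ι} {β : ι → R} (hβ : ∀ j ∉ O, β j = 0) (j : O) :
    (Q.submatrix Subtype.val Subtype.val *ᵥ fun k : O => β k) j = (Q *ᵥ β) j := by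
  simp only [mulVec, dotProduct, submatrix_apply]
  rw [sum_coe_sort O fun k => Q j k * β k]
  exact sum_subset (subset_univ O) fun k _ hk => by rw [hβ k hk, mul_zero]

theorem Real.sign_mul_le_abs (s t : ℝ) : Real.sign s * t ≤ |t| := by
  rcases Real.sign_apply_eq s with h | h | h <;> simp [h, neg_le_abs, le_abs_self]

section Criterion

variable {ι : Type*} [Fintype ι] {n : ℕ} (y : Fin n → ℝ) (X : Matrix (Fin n) ι ℝ)
  (L : Matrix ι ι ℝ) (lam1 lam2 γ : ℝ)

noncomputable def slsCriterion (b : ι → ℝ) : ℝ :=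
  (2 * n : ℝ)⁻¹ * ∑ i, (y i - (X *ᵥ b) i) ^ 2 + ∑ j, mcp lam1 γ (b j)
    + lam2 / 2 * (b ⬝ᵥ L *ᵥ b)

noncomputable def slsNegGradient (β : ι → ℝ) : ι → ℝ :=
  (n : ℝ)⁻¹ • (Xᵀ *ᵥ (y - X *ᵥ β)) - lam2 • (L *ᵥ β)

variable {y X L lam1 lam2 γ}

theorem slsCriterion_add_sub (hL : Lᵀ = L) (β h : ι → ℝ) :
    slsCriterion y X L lam1 lam2 γ (β + h) - slsCriterion y X L lam1 lam2 γ β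
      = 1 / 2 * (h ⬝ᵥ ((n : ℝ)⁻¹ • (Xᵀ * X) + lam2 • L) *ᵥ h)
        + ∑ j, (mcp lam1 γ (β j + h j) - mcp lam1 γ (β j)
          - h j * slsNegGradient y X L lam2 β j) := by
  have hgrad : ∑ j, h j * slsNegGradient y X L lam2 β j
      = (n : ℝ)⁻¹ * (h ⬝ᵥ Xᵀ *ᵥ (y - X *ᵥ β)) - lam2 * (h ⬝ᵥ L *ᵥ β) := by
    change h ⬝ᵥ slsNegGradient y X L lam2 β = _
    rw [slsNegGradient, dotProduct_sub, dotProduct_smul, dotProduct_smul, smul_eq_mul, smul_eq_mul]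
  simp only [slsCriterion, sum_sub_distrib, hgrad, Pi.add_apply, sum_sq_sub_mulVec_add,
    dotProduct_mulVec_add_of_transpose_eq hL, add_mulVec, smul_mulVec, dotProduct_add,
    dotProduct_smul, smul_eq_mul, mul_inv]
  ring

theorem slsCriterion_lt_of_kkt (hlam1 : 0 < lam1) (hγ : 0 < γ) (hL : Lᵀ = L) {c : ℝ}
    (hγc : 1 / γ < c)
    (hc : ∀ h : ι → ℝ, c * ∑ j, h j ^ 2 ≤ h ⬝ᵥ ((n : ℝ)⁻¹ • (Xᵀ * X) + lam2 • L) *ᵥ h)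
    {β : ι → ℝ}
    (hkkt : ∀ j, (γ * lam1 ≤ |β j| ∧ slsNegGradient y X L lam2 β j = 0) ∨
      (β j = 0 ∧ |slsNegGradient y X L lam2 β j| ≤ lam1))
    {b : ι → ℝ} (hb : b ≠ β) :
    slsCriterion y X L lam1 lam2 γ β < slsCriterion y X L lam1 lam2 γ b := by
  obtain ⟨h, rfl⟩ : ∃ h, b = β + h := ⟨b - β, by abel⟩
  have hcoord : ∀ j, -(h j ^ 2 / (2 * γ)) ≤ mcp lam1 γ (β j + h j) - mcp lam1 γ (β j)
      - h j * slsNegGradient y X L lam2 β j := fun j => by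
    rcases hkkt j with ⟨hβ, hg⟩ | ⟨hβ, hg⟩
    · simpa [hg] using neg_sq_div_le_mcp_add_sub_of_le_abs hlam1 hγ hβ (h j)
    · simpa [hβ, mcp_zero hlam1 hγ] using neg_sq_div_le_mcp_sub_mul hlam1 hγ hg (h j)
  have hS : 0 < ∑ j, h j ^ 2 := by
    obtain ⟨j, hj⟩ := Function.ne_iff.mp (show h ≠ 0 by rintro rfl; simp at hb)
    exact sum_pos' (fun j _ => sq_nonneg _) ⟨j, mem_univ j, sq_pos_of_ne_zero hj⟩
  have hpen := sum_le_sum fun j (_ : j ∈ univ) => hcoord j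
  rw [sum_neg_distrib, ← sum_div] at hpen
  have hgap : (∑ j, h j ^ 2) / γ < c * ∑ j, h j ^ 2 := by
    rw [div_eq_inv_mul, ← one_div]; exact mul_lt_mul_of_pos_right hγc hS
  have hhalf : (∑ j, h j ^ 2) / (2 * γ) = (∑ j, h j ^ 2) / γ / 2 := by ring
  rw [← sub_pos, slsCriterion_add_sub hL]
  linarith [hc h]

theorem slsNegGradient_apply (β : ι → ℝ) (j : ι) :
    slsNegGradient y X L lam2 β j
      = (∑ i, X i j * (y i - (X *ᵥ β) i)) / n - lam2 * (L *ᵥ β) j := by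
  simp [slsNegGradient, mulVec, dotProduct, div_eq_inv_mul]

theorem slsNegGradient_eq (β : ι → ℝ) :
    slsNegGradient y X L lam2 β
      = (n : ℝ)⁻¹ • (Xᵀ *ᵥ y) - ((n : ℝ)⁻¹ • (Xᵀ * X) + lam2 • L) *ᵥ β := by
  simp only [slsNegGradient, mulVec_sub, add_mulVec, smul_mulVec, mulVec_mulVec, smul_sub]
  abel

theorem slsNegGradient_eq_zero_of_oracle {O : Finset ι} {β : ι → ℝ}
    (hβ0 : ∀ j ∉ O, β j = 0)
    (hβO : ((n : ℝ)⁻¹ • (Xᵀ * X) + lam2 • L).submatrix Subtype.val Subtype.val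
      *ᵥ (fun k : O => β k) = fun k : O => ((n : ℝ)⁻¹ • (Xᵀ *ᵥ y)) k)
    {j : ι} (hj : j ∈ O) : slsNegGradient y X L lam2 β j = 0 := by
  rw [slsNegGradient_eq, Pi.sub_apply, ← mulVec_submatrix_val_of_eq_zero hβ0 ⟨j, hj⟩, hβO,
    sub_self]

end Criterion

theorem sls_kkt_sufficiency_general
    (n p : ℕ)
    (y : Fin n → ℝ) (X : Matrix (Fin n) (Fin p) ℝ)
    (O : Finset (Fin p))
    (A : Matrix (Fin p) (Fin p) ℝ) (hAsymm : A.IsSymm)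
    (L : Matrix (Fin p) (Fin p) ℝ)
    (hL : L = Matrix.diagonal (fun j => ∑ k, |A j k|) - A)
    (lam1 lam2 γ : ℝ) (hlam1 : 0 < lam1) (hγ : 0 < γ)
    (Sm : Matrix (Fin p) (Fin p) ℝ) (hSm : Sm = (n : ℝ)⁻¹ • (Xᵀ * X))
    -- c_min(λ₂) > 1/γ: the smallest eigenvalue of Σ + λ₂L exceeds 1/γ
    (hcmin : ∃ c : ℝ, 1/γ < c ∧ ∀ b : Fin p → ℝ,
      c * ∑ j, (b j)^2 ≤ b ⬝ᵥ (Sm + lam2 • L).mulVec b)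
    (SO LO : Matrix {j : Fin p // j ∈ O} {j : Fin p // j ∈ O} ℝ)
    (hSO : ∀ j k, SO j k = Sm j.1 k.1) (hLO : ∀ j k, LO j k = L j.1 k.1)
    (SOl : Matrix {j : Fin p // j ∈ O} {j : Fin p // j ∈ O} ℝ)
    (hSOl : SOl = SO + lam2 • LO)
    (hinv : IsUnit SOl.det)
    -- the oracle Laplacian shrinkage estimator
    (βor : Fin p → ℝ)
    (hβor0 : ∀ j ∉ O, βor j = 0)
    (hβorO : ∀ (j : {j : Fin p // j ∈ O}),
      βor j.1 = SOl⁻¹.mulVec (fun k => (∑ i, X i k.1 * y i) / n) j)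
    -- the target β*
    (βstar : Fin p → ℝ)
    -- MCP penalty and the SLS criterion
    (ρ : ℝ → ℝ)
    (hρ : ∀ t, ρ t = lam1 * ∫ x in (0:ℝ)..|t|, max (1 - x / (γ * lam1)) 0)
    (M : (Fin p → ℝ) → ℝ)
    (hM : ∀ b, M b = (2 * n : ℝ)⁻¹ * ∑ i, (y i - X.mulVec b i)^2
      + ∑ j, ρ (|b j|) + lam2 / 2 * (b ⬝ᵥ L.mulVec b))
    -- (a) the KKT condition off the support
    (hKKTa : ∀ j ∉ O,
      |(∑ i, X i j * (y i - X.mulVec βor i)) / n - lam2 * L.mulVec βor j| ≤ lam1)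
    -- (b) the sign/magnitude condition on the support
    (hKKTb : ∀ j ∈ O, γ * lam1 ≤ Real.sign (βstar j) * βor j) :
    (∀ b, b ≠ βor → M βor < M b) ∧ {j | βor j ≠ 0} = (O : Set (Fin p)) := by
  obtain ⟨c, hγc, hc⟩ := hcmin
  subst hSm
  have hLsymm : Lᵀ = L := by rw [hL, transpose_sub, diagonal_transpose, hAsymm]
  have hMsls : M = slsCriterion y X L lam1 lam2 γ :=
    funext fun b => by simp only [hM, hρ, abs_abs, slsCriterion, mcp]
  have hmag : ∀ j ∈ O, γ * lam1 ≤ |βor j| :=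
    fun j hj => (hKKTb j hj).trans (Real.sign_mul_le_abs _ _)
  have hnormal : ((n : ℝ)⁻¹ • (Xᵀ * X) + lam2 • L).submatrix Subtype.val Subtype.val
      *ᵥ (fun k : O => βor k) = fun k : O => ((n : ℝ)⁻¹ • (Xᵀ *ᵥ y)) k := by
    have hSOl_eq : SOl = ((n : ℝ)⁻¹ • (Xᵀ * X) + lam2 • L).submatrix Subtype.val Subtype.val := by
      ext j k; simp [hSOl, hSO, hLO]
    rw [← hSOl_eq, funext hβorO, mulVec_mulVec, mul_nonsing_inv _ hinv, one_mulVec]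
    ext k; simp [mulVec, dotProduct, div_eq_inv_mul]
  have hkkt : ∀ j, (γ * lam1 ≤ |βor j| ∧ slsNegGradient y X L lam2 βor j = 0) ∨
      (βor j = 0 ∧ |slsNegGradient y X L lam2 βor j| ≤ lam1) := fun j => by
    by_cases hj : j ∈ O
    · exact .inl ⟨hmag j hj, slsNegGradient_eq_zero_of_oracle hβor0 hnormal hj⟩
    · exact .inr ⟨hβor0 j hj, by simpa only [slsNegGradient_apply] using hKKTa j hj⟩
  refine ⟨fun b hb => hMsls ▸ slsCriterion_lt_of_kkt hlam1 hγ hLsymm hγc hc hkkt hb, ?_⟩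
  ext j
  exact ⟨fun hj => by_contra fun hjO => hj (hβor0 j hjO),
    fun hj => abs_pos.mp ((mul_pos hγ hlam1).trans_le (hmag j hj))⟩

/-- **KKT sufficiency for the SLS criterion** (from the proof of Theorem 1 of
Huang, Ma, Li, Zhang (2011)). If `c_min(λ₂) > 1/γ` (strict convexity) and the
oracle Laplacian shrinkage estimator `β̂°` satisfies the KKT-type conditions (a)
`|x_j'(y − Xβ̂°)/n − λ₂(Lβ̂°)_j| ≤ λ₁` for all `j ∉ O` and (b)
`sgn(β*_j)·β̂°_j ≥ γλ₁` for all `j ∈ O`, then `β̂°` is the unique global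
minimizer of the SLS criterion `M` and its support is exactly `O`. -/
theorem sls_kkt_sufficiency
    (n p : ℕ) (hn : 0 < n)
    (y : Fin n → ℝ) (X : Matrix (Fin n) (Fin p) ℝ) (βo : Fin p → ℝ)
    (O : Finset (Fin p)) (hOne : O.Nonempty)
    (hβo0 : ∀ j ∉ O, βo j = 0)
    (A : Matrix (Fin p) (Fin p) ℝ) (hAsymm : A.IsSymm) (hAdiag : ∀ j, 0 ≤ A j j)
    (L : Matrix (Fin p) (Fin p) ℝ)
    (hL : L = Matrix.diagonal (fun j => ∑ k, |A j k|) - A)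
    (lam1 lam2 γ : ℝ) (hlam1 : 0 < lam1) (hlam2 : 0 ≤ lam2) (hγ : 0 < γ)
    (Sm : Matrix (Fin p) (Fin p) ℝ) (hSm : Sm = (n : ℝ)⁻¹ • (Xᵀ * X))
    -- c_min(λ₂) > 1/γ: the smallest eigenvalue of Σ + λ₂L exceeds 1/γ
    (hcmin : ∃ c : ℝ, 1/γ < c ∧ ∀ b : Fin p → ℝ,
      c * ∑ j, (b j)^2 ≤ b ⬝ᵥ (Sm + lam2 • L).mulVec b)
    (SO LO : Matrix {j : Fin p // j ∈ O} {j : Fin p // j ∈ O} ℝ)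
    (hSO : ∀ j k, SO j k = Sm j.1 k.1) (hLO : ∀ j k, LO j k = L j.1 k.1)
    (SOl : Matrix {j : Fin p // j ∈ O} {j : Fin p // j ∈ O} ℝ)
    (hSOl : SOl = SO + lam2 • LO)
    (hinv : IsUnit SOl.det)
    -- the oracle Laplacian shrinkage estimator
    (βor : Fin p → ℝ)
    (hβor0 : ∀ j ∉ O, βor j = 0)
    (hβorO : ∀ (j : {j : Fin p // j ∈ O}),
      βor j.1 = SOl⁻¹.mulVec (fun k => (∑ i, X i k.1 * y i) / n) j)
    -- the target β*
    (βstar : Fin p → ℝ)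
    (hβstar0 : ∀ j ∉ O, βstar j = 0)
    (hβstarO : ∀ (j : {j : Fin p // j ∈ O}),
      βstar j.1 = SOl⁻¹.mulVec (SO.mulVec (fun k => βo k.1)) j)
    (hβstarne : ∀ j ∈ O, βstar j ≠ 0)
    -- MCP penalty and the SLS criterion
    (ρ : ℝ → ℝ)
    (hρ : ∀ t, ρ t = lam1 * ∫ x in (0:ℝ)..|t|, max (1 - x / (γ * lam1)) 0)
    (M : (Fin p → ℝ) → ℝ)
    (hM : ∀ b, M b = (2 * n : ℝ)⁻¹ * ∑ i, (y i - X.mulVec b i)^2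
      + ∑ j, ρ (|b j|) + lam2 / 2 * (b ⬝ᵥ L.mulVec b))
    -- (a) the KKT condition off the support
    (hKKTa : ∀ j ∉ O,
      |(∑ i, X i j * (y i - X.mulVec βor i)) / n - lam2 * L.mulVec βor j| ≤ lam1)
    -- (b) the sign/magnitude condition on the support
    (hKKTb : ∀ j ∈ O, γ * lam1 ≤ Real.sign (βstar j) * βor j) :
    (∀ b, b ≠ βor → M βor < M b) ∧ {j | βor j ≠ 0} = (O : Set (Fin p)) :=
  sls_kkt_sufficiency_general n p y X O A hAsymm L hL lam1 lam2 γ hlam1 hγ Sm hSm hcmin SO LO hSO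
    hLO SOl hSOl hinv βor hβor0 hβorO βstar ρ hρ M hM hKKTa hKKTb
end

section
/- The function (b₁, b₂) ↦ (2n)⁻¹Σ_{i=1}^n (y_i − x_{i1}b₁ − x_{i2}b₂)² + (λ₂/2)(b₁ − b₂)² is strictly convex and has a unique minimizer (b̂_L1(λ₂), b̂_L2(λ₂)) given by b̂_L1(λ₂) = ((1+λ₂)r₁ − (r₁₂−λ₂)r₂)/((1+λ₂)² − (r₁₂−λ₂)²) and b̂_L2(λ₂) = ((1+λ₂)r₂ − (r₁₂−λ₂)r₁)/((1+λ₂)² − (r₁₂−λ₂)²), the denominator (1+λ₂)² − (r₁₂−λ₂)² = (1+r₁₂)(1−r₁₂+2λ₂) being strictly positive. -/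
/-! Under `‖xⱼ‖² = n` the criterion is `g(b) = ‖y‖²/(2n) + Q(b)/2 - r₁b₁ - r₂b₂` with
`Q(u) = (1+λ₂)u₁² + 2(r₁₂-λ₂)u₁u₂ + (1+λ₂)u₂²`, whose determinant `(1+r₁₂)(1-r₁₂+2λ₂)` is
positive, so `Q` is positive definite. Then `s g(p) + t g(q) - g(sp + tq) = (st/2) Q(p - q)`
gives strict convexity, and at the Cramer solution `b₀` of the normal equations
`g(b) - g(b₀) = Q(b - b₀)/2` gives strict minimality. -/

open Finset

noncomputable def quadForm2 (a m d : ℝ) (u : ℝ × ℝ) : ℝ :=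
  a * u.1 ^ 2 + 2 * m * u.1 * u.2 + d * u.2 ^ 2

noncomputable def quadFun2 (c a m d r₁ r₂ : ℝ) (b : ℝ × ℝ) : ℝ :=
  c + quadForm2 a m d b / 2 - (r₁ * b.1 + r₂ * b.2)

section QuadraticFunction

variable {a m d : ℝ}

theorem quadForm2_pos (ha : 0 < a) (hdet : 0 < a * d - m ^ 2) {u : ℝ × ℝ} (hu : u ≠ 0) :
    0 < quadForm2 a m d u := by
  have completed_square :
      a * quadForm2 a m d u = (a * u.1 + m * u.2) ^ 2 + (a * d - m ^ 2) * u.2 ^ 2 := by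
    unfold quadForm2; ring
  rcases eq_or_ne u.2 0 with hu₂ | hu₂
  · have hu₁ : u.1 ≠ 0 := fun hu₁ => hu (Prod.ext hu₁ hu₂)
    have hQ : quadForm2 a m d u = a * u.1 ^ 2 := by simp [quadForm2, hu₂]
    rw [hQ]
    exact mul_pos ha (sq_pos_of_ne_zero hu₁)
  · refine pos_of_mul_pos_right ?_ ha.le
    rw [completed_square]
    positivity

theorem quadFun2_convex_combination (c r₁ r₂ : ℝ) (p q : ℝ × ℝ) {s t : ℝ} (hst : s + t = 1) :
    s * quadFun2 c a m d r₁ r₂ p + t * quadFun2 c a m d r₁ r₂ q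
      - quadFun2 c a m d r₁ r₂ (s • p + t • q) = s * t / 2 * quadForm2 a m d (p - q) := by
  obtain rfl : t = 1 - s := by linarith
  simp only [quadFun2, quadForm2, Prod.fst_add, Prod.snd_add, Prod.smul_fst, Prod.smul_snd,
    Prod.fst_sub, Prod.snd_sub, smul_eq_mul]
  ring

theorem strictConvexOn_quadFun2 (c r₁ r₂ : ℝ) (ha : 0 < a) (hdet : 0 < a * d - m ^ 2) :
    StrictConvexOn ℝ Set.univ (quadFun2 c a m d r₁ r₂) := by
  refine ⟨convex_univ, fun p _ q _ hpq s t hs ht hst => ?_⟩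
  have defect_pos : 0 < s * t / 2 * quadForm2 a m d (p - q) :=
    mul_pos (by positivity) (quadForm2_pos ha hdet (sub_ne_zero.mpr hpq))
  have := quadFun2_convex_combination (a := a) (m := m) (d := d) c r₁ r₂ p q hst
  simp only [smul_eq_mul]
  linarith

theorem quadFun2_sub_of_normal_eqns (c r₁ r₂ : ℝ) {b₀ : ℝ × ℝ}
    (h₁ : a * b₀.1 + m * b₀.2 = r₁) (h₂ : m * b₀.1 + d * b₀.2 = r₂) (b : ℝ × ℝ) :
    quadFun2 c a m d r₁ r₂ b - quadFun2 c a m d r₁ r₂ b₀ = quadForm2 a m d (b - b₀) / 2 := by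
  simp only [quadFun2, quadForm2, Prod.fst_sub, Prod.snd_sub]
  linear_combination (b.1 - b₀.1) * h₁ + (b.2 - b₀.2) * h₂

theorem quadFun2_lt_of_normal_eqns (c r₁ r₂ : ℝ) (ha : 0 < a) (hdet : 0 < a * d - m ^ 2)
    {b₀ : ℝ × ℝ} (h₁ : a * b₀.1 + m * b₀.2 = r₁) (h₂ : m * b₀.1 + d * b₀.2 = r₂)
    {b : ℝ × ℝ} (hb : b ≠ b₀) :
    quadFun2 c a m d r₁ r₂ b₀ < quadFun2 c a m d r₁ r₂ b := by
  have := quadFun2_sub_of_normal_eqns c r₁ r₂ h₁ h₂ b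
  have := quadForm2_pos ha hdet (sub_ne_zero.mpr hb)
  linarith

theorem normal_eqns_of_cramer (r₁ r₂ : ℝ) (hdet : a * d - m ^ 2 ≠ 0) :
    a * ((d * r₁ - m * r₂) / (a * d - m ^ 2)) + m * ((a * r₂ - m * r₁) / (a * d - m ^ 2)) = r₁ ∧
      m * ((d * r₁ - m * r₂) / (a * d - m ^ 2)) + d * ((a * r₂ - m * r₁) / (a * d - m ^ 2))
        = r₂ := by
  constructor <;>
    rw [mul_div_assoc', mul_div_assoc', ← add_div, div_eq_iff hdet] <;> ring

end QuadraticFunction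

theorem sum_sq_residual_two {ι : Type*} (s : Finset ι) (y x₁ x₂ : ι → ℝ) (b₁ b₂ : ℝ) :
    ∑ i ∈ s, (y i - x₁ i * b₁ - x₂ i * b₂) ^ 2
      = ∑ i ∈ s, y i ^ 2 + b₁ ^ 2 * ∑ i ∈ s, x₁ i ^ 2 + b₂ ^ 2 * ∑ i ∈ s, x₂ i ^ 2
        - 2 * b₁ * ∑ i ∈ s, x₁ i * y i - 2 * b₂ * ∑ i ∈ s, x₂ i * y i
        + 2 * b₁ * b₂ * ∑ i ∈ s, x₁ i * x₂ i := by
  simp only [mul_sum, ← sum_add_distrib, ← sum_sub_distrib]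
  exact sum_congr rfl fun i _ => by ring

theorem laplacian_criterion_eq_quadFun2 {n : ℕ} (hn : 0 < n) (y x₁ x₂ : Fin n → ℝ)
    (hx₁ : ∑ i, x₁ i ^ 2 = (n : ℝ)) (hx₂ : ∑ i, x₂ i ^ 2 = (n : ℝ)) (lam : ℝ) (b : ℝ × ℝ) :
    (2 * n : ℝ)⁻¹ * ∑ i, (y i - x₁ i * b.1 - x₂ i * b.2) ^ 2 + lam / 2 * (b.1 - b.2) ^ 2
      = quadFun2 ((∑ i, y i ^ 2) / (2 * n)) (1 + lam) ((∑ i, x₁ i * x₂ i) / n - lam) (1 + lam)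
          ((∑ i, x₁ i * y i) / n) ((∑ i, x₂ i * y i) / n) b := by
  have hn' : (n : ℝ) ≠ 0 := by positivity
  rw [sum_sq_residual_two, hx₁, hx₂]
  simp only [quadFun2, quadForm2]
  field_simp
  ring

/-- **Example 1 (Laplacian shrinkage with two predictors), closed form** (Huang,
Ma, Li, Zhang (2011)). The two-predictor Laplacian shrinkage criterion is
strictly convex with the stated unique minimizer, whose denominator
`(1+λ₂)² − (r₁₂−λ₂)² = (1+r₁₂)(1−r₁₂+2λ₂)` is strictly positive. -/
theorem two_predictor_laplacian_shrinkage_closed_form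
    (n : ℕ) (hn : 0 < n)
    (y x1 x2 : Fin n → ℝ)
    (hx1 : ∑ i, (x1 i)^2 = (n : ℝ)) (hx2 : ∑ i, (x2 i)^2 = (n : ℝ))
    (r1 r2 r12 : ℝ)
    (hr1 : r1 = (∑ i, x1 i * y i) / n) (hr2 : r2 = (∑ i, x2 i * y i) / n)
    (hr12 : r12 = (∑ i, x1 i * x2 i) / n) (hr12lt : |r12| < 1)
    (lam2 : ℝ) (hlam2 : 0 < lam2)
    (f : ℝ × ℝ → ℝ)
    (hf : ∀ b, f b = (2 * n : ℝ)⁻¹ * ∑ i, (y i - x1 i * b.1 - x2 i * b.2)^2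
      + lam2 / 2 * (b.1 - b.2)^2)
    (bL1 bL2 : ℝ)
    (hbL1 : bL1 = ((1 + lam2) * r1 - (r12 - lam2) * r2)
      / ((1 + lam2)^2 - (r12 - lam2)^2))
    (hbL2 : bL2 = ((1 + lam2) * r2 - (r12 - lam2) * r1)
      / ((1 + lam2)^2 - (r12 - lam2)^2)) :
    StrictConvexOn ℝ Set.univ f
    ∧ (∀ b, b ≠ (bL1, bL2) → f (bL1, bL2) < f b)
    ∧ (1 + lam2)^2 - (r12 - lam2)^2 = (1 + r12) * (1 - r12 + 2 * lam2)
    ∧ 0 < (1 + lam2)^2 - (r12 - lam2)^2 := by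
  obtain ⟨hr12_gt, hr12_lt⟩ := abs_lt.mp hr12lt
  have hdet_eq : (1 + lam2)^2 - (r12 - lam2)^2 = (1 + r12) * (1 - r12 + 2 * lam2) := by ring
  have hdet : 0 < (1 + lam2)^2 - (r12 - lam2)^2 := by
    rw [hdet_eq]; exact mul_pos (by linarith) (by linarith)
  have ha : 0 < 1 + lam2 := by linarith
  have hdet' : 0 < (1 + lam2) * (1 + lam2) - (r12 - lam2) ^ 2 := by rwa [← sq]
  have hf_quad :
      f = quadFun2 ((∑ i, y i ^ 2) / (2 * n)) (1 + lam2) (r12 - lam2) (1 + lam2) r1 r2 :=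
    funext fun b => by
      rw [hf, hr1, hr2, hr12, laplacian_criterion_eq_quadFun2 hn y x1 x2 hx1 hx2]
  obtain ⟨h₁, h₂⟩ := normal_eqns_of_cramer r1 r2 hdet'.ne'
  rw [← sq, ← hbL1, ← hbL2] at h₁ h₂
  refine ⟨hf_quad ▸ strictConvexOn_quadFun2 _ r1 r2 ha hdet', fun b hb => ?_, hdet_eq, hdet⟩
  rw [hf_quad]
  exact quadFun2_lt_of_normal_eqns _ r1 r2 ha hdet' h₁ h₂ hb
end

section
/- Let (b̂_L1(λ₂), b̂_L2(λ₂)) be the unique minimizer of (b₁, b₂) ↦ (2n)⁻¹‖y − x₁b₁ − x₂b₂‖² + (λ₂/2)(b₁ − b₂)², let b̂_L(∞) = (r₁ + r₂)/(2(1 + r₁₂)), and let w_L = 2λ₂/(1 − r₁₂ + 2λ₂) ∈ (0,1). Then b̂_L1(λ₂) = (1 − w_L)·b̂_ols1 + w_L·b̂_L(∞) and b̂_L2(λ₂) = (1 − w_L)·b̂_ols2 + w_L·b̂_L(∞). That is, the Laplacian shrinkage estimate is a convex combination of the bivariate OLS estimate and the OLS estimate computed under the constraint of equal coefficients, and as λ₂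 → ∞ both coordinates converge to b̂_L(∞). -/
/-!
In the coordinates `s = b₁ + b₂` and `d = b₁ − b₂` the criterion splits into two independent
one-dimensional quadratics, `(1 + r₁₂)/4 · s² − (r₁ + r₂)/2 · s` and
`(1 − r₁₂ + 2λ₂)/4 · d² − (r₁ − r₂)/2 · d`. The penalty only touches the second one, so the
minimizer has the same sum `(r₁ + r₂)/(1 + r₁₂) = 2 b̂_L(∞)` as the OLS estimate, while its
difference is the OLS difference `(r₁ − r₂)/(1 − r₁₂)` shrunk by the factor
`(1 − r₁₂)/(1 − r₁₂ + 2λ₂) = 1 − w_L`.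
-/

open Finset Filter Topology

theorem sum_sq_sub_mul_sub_mul {ι : Type*} [Fintype ι] (y x₁ x₂ : ι → ℝ) (b₁ b₂ : ℝ) :
    ∑ i, (y i - x₁ i * b₁ - x₂ i * b₂) ^ 2 =
      ∑ i, y i ^ 2 - 2 * b₁ * ∑ i, x₁ i * y i - 2 * b₂ * ∑ i, x₂ i * y i
        + b₁ ^ 2 * ∑ i, x₁ i ^ 2 + b₂ ^ 2 * ∑ i, x₂ i ^ 2
        + 2 * b₁ * b₂ * ∑ i, x₁ i * x₂ i := by
  simp only [mul_sum, ← sum_sub_distrib, ← sum_add_distrib]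
  exact sum_congr rfl fun i _ => by ring

noncomputable def scaledQuadratic (c t s : ℝ) : ℝ := c / 4 * s ^ 2 - t / 2 * s

theorem scaledQuadratic_le {c : ℝ} (hc : 0 < c) (t s : ℝ) :
    scaledQuadratic c t (t / c) ≤ scaledQuadratic c t s := by
  have hsq : scaledQuadratic c t s - scaledQuadratic c t (t / c) = c / 4 * (s - t / c) ^ 2 := by
    unfold scaledQuadratic
    field_simp
    ring
  rw [← sub_nonneg, hsq]
  positivity

noncomputable def laplacianCriterion {ι : Type*} [Fintype ι] (y x₁ x₂ : ι → ℝ) (N l : ℝ)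
    (b : ℝ × ℝ) : ℝ :=
  (2 * N)⁻¹ * ∑ i, (y i - x₁ i * b.1 - x₂ i * b.2) ^ 2 + l / 2 * (b.1 - b.2) ^ 2

section Criterion

variable {ι : Type*} [Fintype ι] {N : ℝ} {y x₁ x₂ : ι → ℝ} {r₁ r₂ r₁₂ : ℝ}

theorem laplacianCriterion_eq (hN : N ≠ 0) (hx₁ : ∑ i, x₁ i ^ 2 = N) (hx₂ : ∑ i, x₂ i ^ 2 = N)
    (hr₁ : r₁ = (∑ i, x₁ i * y i) / N) (hr₂ : r₂ = (∑ i, x₂ i * y i) / N)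
    (hr₁₂ : r₁₂ = (∑ i, x₁ i * x₂ i) / N) (l : ℝ) (b : ℝ × ℝ) :
    laplacianCriterion y x₁ x₂ N l b = (2 * N)⁻¹ * ∑ i, y i ^ 2
      + scaledQuadratic (1 + r₁₂) (r₁ + r₂) (b.1 + b.2)
      + scaledQuadratic (1 - r₁₂ + 2 * l) (r₁ - r₂) (b.1 - b.2) := by
  rw [laplacianCriterion, sum_sq_sub_mul_sub_mul, hx₁, hx₂, hr₁, hr₂, hr₁₂]
  unfold scaledQuadratic
  field_simp
  ring

theorem laplacianCriterion_le (hN : N ≠ 0) (hx₁ : ∑ i, x₁ i ^ 2 = N) (hx₂ : ∑ i, x₂ i ^ 2 = N)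
    (hr₁ : r₁ = (∑ i, x₁ i * y i) / N) (hr₂ : r₂ = (∑ i, x₂ i * y i) / N)
    (hr₁₂ : r₁₂ = (∑ i, x₁ i * x₂ i) / N) {l : ℝ} (hp : 0 < 1 + r₁₂) (hq : 0 < 1 - r₁₂ + 2 * l)
    {a : ℝ × ℝ} (hs : a.1 + a.2 = (r₁ + r₂) / (1 + r₁₂))
    (hd : a.1 - a.2 = (r₁ - r₂) / (1 - r₁₂ + 2 * l)) (b : ℝ × ℝ) :
    laplacianCriterion y x₁ x₂ N l a ≤ laplacianCriterion y x₁ x₂ N l b := by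
  simp only [laplacianCriterion_eq hN hx₁ hx₂ hr₁ hr₂ hr₁₂, hs, hd]
  gcongr ?_ + ?_ + ?_
  · exact le_rfl
  · exact scaledQuadratic_le hp _ _
  · exact scaledQuadratic_le hq _ _

end Criterion

theorem eq_of_forall_lt_of_forall_le {α β : Type*} [LinearOrder β] {f : α → β} {m a : α}
    (hm : ∀ b, b ≠ m → f m < f b) (ha : ∀ b, f a ≤ f b) : m = a := by
  by_contra h
  exact (hm a (Ne.symm h)).not_ge (ha m)

section WeightedAverage

variable {r₁ r₂ r₁₂ bols₁ bols₂ bLinf : ℝ}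

theorem weightedAverage_add_weightedAverage (hp : 1 + r₁₂ ≠ 0) (hsq : 1 - r₁₂ ^ 2 ≠ 0)
    (hbols₁ : bols₁ = (r₁ - r₁₂ * r₂) / (1 - r₁₂ ^ 2))
    (hbols₂ : bols₂ = (r₂ - r₁₂ * r₁) / (1 - r₁₂ ^ 2))
    (hbLinf : bLinf = (r₁ + r₂) / (2 * (1 + r₁₂))) (w : ℝ) :
    (1 - w) * bols₁ + w * bLinf + ((1 - w) * bols₂ + w * bLinf) = (r₁ + r₂) / (1 + r₁₂) := by
  subst hbols₁ hbols₂ hbLinf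
  field_simp
  ring

theorem weightedAverage_sub_weightedAverage (hsq : 1 - r₁₂ ^ 2 ≠ 0) {l : ℝ}
    (hq : 1 - r₁₂ + 2 * l ≠ 0)
    (hbols₁ : bols₁ = (r₁ - r₁₂ * r₂) / (1 - r₁₂ ^ 2))
    (hbols₂ : bols₂ = (r₂ - r₁₂ * r₁) / (1 - r₁₂ ^ 2))
    {w : ℝ} (hw : w = 2 * l / (1 - r₁₂ + 2 * l)) :
    (1 - w) * bols₁ + w * bLinf - ((1 - w) * bols₂ + w * bLinf) =
      (r₁ - r₂) / (1 - r₁₂ + 2 * l) := by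
  subst hbols₁ hbols₂ hw
  field_simp
  ring

end WeightedAverage

theorem two_mul_div_add_two_mul_mem_Ioo {c l : ℝ} (hc : 0 < c) (hl : 0 < l) :
    2 * l / (c + 2 * l) ∈ Set.Ioo 0 1 := by
  rw [Set.mem_Ioo, div_lt_one (by positivity)]
  exact ⟨by positivity, by linarith⟩

theorem tendsto_two_mul_div_add_two_mul_atTop (c : ℝ) :
    Tendsto (fun l : ℝ => 2 * l / (c + 2 * l)) atTop (𝓝 1) := by
  have hden : Tendsto (fun l : ℝ => c + 2 * l) atTop atTop :=
    tendsto_atTop_add_const_left _ _ (tendsto_id.const_mul_atTop two_pos)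
  have hrest : Tendsto (fun l : ℝ => 1 - c / (c + 2 * l)) atTop (𝓝 (1 - 0)) :=
    tendsto_const_nhds.sub (tendsto_const_nhds.div_atTop hden)
  rw [sub_zero] at hrest
  refine hrest.congr' ?_
  filter_upwards [hden.eventually_gt_atTop 0] with l hl
  field_simp
  ring

theorem Filter.Tendsto.one_sub_mul_add_mul {α : Type*} {f : Filter α} {w : α → ℝ}
    (hw : Tendsto w f (𝓝 1)) (a b : ℝ) :
    Tendsto (fun x => (1 - w x) * a + w x * b) f (𝓝 b) := by
  simpa using (((tendsto_const_nhds (x := (1 : ℝ))).sub hw).mul_const a).add (hw.mul_const b)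

/-- **Example 1 (Laplacian shrinkage as a weighted average)** (Huang, Ma, Li,
Zhang (2011)). The two-predictor Laplacian shrinkage estimate is the convex
combination `(1 − w_L)·b̂_ols + w_L·b̂_L(∞)` with `w_L = 2λ₂/(1 − r₁₂ + 2λ₂) ∈
(0,1)`, and as `λ₂ → ∞` both coordinates converge to `b̂_L(∞)`. -/
theorem two_predictor_laplacian_shrinkage_weighted_average
    (n : ℕ) (hn : 0 < n)
    (y x1 x2 : Fin n → ℝ)
    (hx1 : ∑ i, (x1 i)^2 = (n : ℝ)) (hx2 : ∑ i, (x2 i)^2 = (n : ℝ))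
    (r1 r2 r12 : ℝ)
    (hr1 : r1 = (∑ i, x1 i * y i) / n) (hr2 : r2 = (∑ i, x2 i * y i) / n)
    (hr12 : r12 = (∑ i, x1 i * x2 i) / n) (hr12lt : |r12| < 1)
    -- the criterion, as a function of the penalty level
    (G : ℝ → ℝ × ℝ → ℝ)
    (hG : ∀ l b, G l b = (2 * n : ℝ)⁻¹ * ∑ i, (y i - x1 i * b.1 - x2 i * b.2)^2
      + l / 2 * (b.1 - b.2)^2)
    -- the Laplacian shrinkage estimator: the unique minimizer at each level l > 0
    (bL : ℝ → ℝ × ℝ)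
    (hbL : ∀ l, 0 < l → ∀ b, b ≠ bL l → G l (bL l) < G l b)
    (bols1 bols2 bLinf : ℝ)
    (hbols1 : bols1 = (r1 - r12 * r2) / (1 - r12^2))
    (hbols2 : bols2 = (r2 - r12 * r1) / (1 - r12^2))
    (hbLinf : bLinf = (r1 + r2) / (2 * (1 + r12)))
    (wL : ℝ → ℝ) (hwL : ∀ l, wL l = 2 * l / (1 - r12 + 2 * l)) :
    (∀ l, 0 < l →
      (bL l).1 = (1 - wL l) * bols1 + wL l * bLinf
      ∧ (bL l).2 = (1 - wL l) * bols2 + wL l * bLinf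
      ∧ wL l ∈ Set.Ioo (0:ℝ) 1)
    ∧ Tendsto (fun l => (bL l).1) atTop (nhds bLinf)
    ∧ Tendsto (fun l => (bL l).2) atTop (nhds bLinf) := by
  have hp : 0 < 1 + r12 := by linarith [abs_lt.mp hr12lt]
  have hm : 0 < 1 - r12 := by linarith [abs_lt.mp hr12lt]
  have hsq : 1 - r12 ^ 2 ≠ 0 := by nlinarith
  have hN : (n : ℝ) ≠ 0 := by positivity
  have hG' : ∀ l, G l = laplacianCriterion y x1 x2 n l := fun l => funext (hG l)
  have hbL_eq : ∀ l, 0 < l →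
      bL l = ((1 - wL l) * bols1 + wL l * bLinf, (1 - wL l) * bols2 + wL l * bLinf) := by
    intro l hl
    have hq : 0 < 1 - r12 + 2 * l := by linarith
    refine eq_of_forall_lt_of_forall_le (hbL l hl) fun b => ?_
    rw [hG']
    exact laplacianCriterion_le hN hx1 hx2 hr1 hr2 hr12 hp hq
      (weightedAverage_add_weightedAverage hp.ne' hsq hbols1 hbols2 hbLinf _)
      (weightedAverage_sub_weightedAverage hsq hq.ne' hbols1 hbols2 (hwL l)) b
  have hwL_tendsto : Tendsto wL atTop (𝓝 1) := by
    rw [funext hwL]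
    exact tendsto_two_mul_div_add_two_mul_atTop (1 - r12)
  refine ⟨fun l hl => ?_, ?_, ?_⟩
  · rw [hbL_eq l hl]
    exact ⟨rfl, rfl, hwL l ▸ two_mul_div_add_two_mul_mem_Ioo hm hl⟩
  · refine (hwL_tendsto.one_sub_mul_add_mul bols1 bLinf).congr' ?_
    filter_upwards [eventually_gt_atTop 0] with l hl
    rw [hbL_eq l hl]
  · refine (hwL_tendsto.one_sub_mul_add_mul bols2 bLinf).congr' ?_
    filter_upwards [eventually_gt_atTop 0] with l hl
    rw [hbL_eq l hl]
end

section
/- The ridge criterion (b₁, b₂) ↦ (2n)⁻¹‖y − x₁b₁ − x₂b₂‖² + (λ₂/2)(b₁² + b₂²) has unique minimizer (b̂_R1(λ₂), b̂_R2(λ₂)) with b̂_R1(λ₂) = ((1+λ₂)r₁ − r₁₂r₂)/((1+λ₂)² − r₁₂²) and b̂_R2(λ₂) = ((1+λ₂)r₂ − r₁₂r₁)/((1+λ₂)² − r₁₂²). Moreover, with w_R = λ₂/(1 + λ₂ − r₁₂²) and c_λ = ((1+λ₂)² − (1+λ₂)r₁₂²)/((1+λ₂)² − r₁₂²), the rescaled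 ridge estimates satisfy (1+λ₂)·b̂_R1(λ₂) = c_λ(1 − w_R)·b̂_ols1 + c_λ·w_R·r₁ and (1+λ₂)·b̂_R2(λ₂) = c_λ(1 − w_R)·b̂_ols2 + c_λ·w_R·r₂; that is, the rescaled ridge estimates are weighted averages of the bivariate OLS estimates and the univariate regression estimates r₁, r₂. -/
/-!
Using `‖x₁‖² = ‖x₂‖² = n`, the ridge criterion is the quadratic `c₀ - rᵀb + ½ bᵀ M b` with
`M = [[1 + λ₂, r₁₂], [r₁₂, 1 + λ₂]]`, which is positive definite because `|r₁₂| < 1 < 1 + λ₂`.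
Expanding it about the Cramer solution `b̂_R` of the normal equations `M b = r` leaves
`½ (b - b̂_R)ᵀ M (b - b̂_R) > 0`, so `b̂_R` is the unique minimizer. The weighted-average identity
is algebra: `c_λ (1 - w_R) = (1 + λ₂)(1 - r₁₂²)/D` and `c_λ w_R = (1 + λ₂) λ₂ / D` with
`D = (1 + λ₂)² - r₁₂²`.
-/

open Finset

noncomputable def symmQuadratic (c₀ r₁ r₂ a c : ℝ) (b : ℝ × ℝ) : ℝ :=
  c₀ - r₁ * b.1 - r₂ * b.2 + a / 2 * (b.1 ^ 2 + b.2 ^ 2) + c * b.1 * b.2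

lemma sum_sq_sub_two_mul {ι : Type*} (s : Finset ι) (y x₁ x₂ : ι → ℝ) (b₁ b₂ : ℝ) :
    ∑ i ∈ s, (y i - x₁ i * b₁ - x₂ i * b₂) ^ 2
      = ∑ i ∈ s, y i ^ 2 - 2 * b₁ * ∑ i ∈ s, x₁ i * y i - 2 * b₂ * ∑ i ∈ s, x₂ i * y i
        + b₁ ^ 2 * ∑ i ∈ s, x₁ i ^ 2 + b₂ ^ 2 * ∑ i ∈ s, x₂ i ^ 2
        + 2 * b₁ * b₂ * ∑ i ∈ s, x₁ i * x₂ i := by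
  simp only [mul_sum, ← sum_sub_distrib, ← sum_add_distrib]
  exact sum_congr rfl fun i _ => by ring

lemma symmQuadratic_form_pos {a c : ℝ} (hca : |c| < a) {d : ℝ × ℝ} (hd : d ≠ 0) :
    0 < a / 2 * (d.1 ^ 2 + d.2 ^ 2) + c * d.1 * d.2 := by
  have hs : 0 < d.1 ^ 2 + d.2 ^ 2 := by
    have : d.1 ≠ 0 ∨ d.2 ≠ 0 := by
      contrapose! hd
      exact Prod.ext hd.1 hd.2
    rcases this with h | h <;> positivity
  have hcross : |c * d.1 * d.2| ≤ |c| * ((d.1 ^ 2 + d.2 ^ 2) / 2) := by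
    rw [mul_assoc, abs_mul]
    gcongr
    rw [abs_mul]
    nlinarith [two_mul_le_add_sq |d.1| |d.2|, sq_abs d.1, sq_abs d.2]
  nlinarith [neg_abs_le (c * d.1 * d.2), mul_pos (sub_pos.mpr hca) hs]

lemma symmQuadratic_eq_add_form {c₀ r₁ r₂ a c : ℝ} {β : ℝ × ℝ}
    (h₁ : a * β.1 + c * β.2 = r₁) (h₂ : a * β.2 + c * β.1 = r₂) (b : ℝ × ℝ) :
    symmQuadratic c₀ r₁ r₂ a c b = symmQuadratic c₀ r₁ r₂ a c β
      + (a / 2 * ((b - β).1 ^ 2 + (b - β).2 ^ 2) + c * (b - β).1 * (b - β).2) := by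
  simp only [symmQuadratic, Prod.fst_sub, Prod.snd_sub, ← h₁, ← h₂]
  ring

lemma symmQuadratic_lt_of_ne {c₀ r₁ r₂ a c : ℝ} (hca : |c| < a) {β : ℝ × ℝ}
    (h₁ : a * β.1 + c * β.2 = r₁) (h₂ : a * β.2 + c * β.1 = r₂) {b : ℝ × ℝ} (hb : b ≠ β) :
    symmQuadratic c₀ r₁ r₂ a c β < symmQuadratic c₀ r₁ r₂ a c b := by
  rw [symmQuadratic_eq_add_form h₁ h₂ b]
  linarith [symmQuadratic_form_pos hca (sub_ne_zero.mpr hb)]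

lemma cramer_symm_two_by_two {a c r₁ r₂ : ℝ} (h : a ^ 2 - c ^ 2 ≠ 0) :
    a * ((a * r₁ - c * r₂) / (a ^ 2 - c ^ 2)) + c * ((a * r₂ - c * r₁) / (a ^ 2 - c ^ 2)) = r₁ := by
  field_simp
  ring

lemma ridge_rescaled_eq_weighted_average {r₁ r₂ r₁₂ lam : ℝ}
    (h₁ : 1 - r₁₂ ^ 2 ≠ 0) (h₂ : 1 + lam - r₁₂ ^ 2 ≠ 0) :
    (1 + lam) * (((1 + lam) * r₁ - r₁₂ * r₂) / ((1 + lam) ^ 2 - r₁₂ ^ 2))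
      = ((1 + lam) ^ 2 - (1 + lam) * r₁₂ ^ 2) / ((1 + lam) ^ 2 - r₁₂ ^ 2)
          * (1 - lam / (1 + lam - r₁₂ ^ 2)) * ((r₁ - r₁₂ * r₂) / (1 - r₁₂ ^ 2))
        + ((1 + lam) ^ 2 - (1 + lam) * r₁₂ ^ 2) / ((1 + lam) ^ 2 - r₁₂ ^ 2)
          * (lam / (1 + lam - r₁₂ ^ 2)) * r₁ := by
  field_simp
  ring

/-- **Example 1 (ridge shrinkage with two predictors)** (Huang, Ma, Li, Zhang
(2011)). The two-predictor ridge criterion has the stated unique minimizer, and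
the rescaled ridge estimates are weighted averages of the bivariate OLS
estimates and the univariate regression estimates `r₁, r₂`. -/
theorem two_predictor_ridge_weighted_average
    (n : ℕ) (hn : 0 < n)
    (y x1 x2 : Fin n → ℝ)
    (hx1 : ∑ i, (x1 i)^2 = (n : ℝ)) (hx2 : ∑ i, (x2 i)^2 = (n : ℝ))
    (r1 r2 r12 : ℝ)
    (hr1 : r1 = (∑ i, x1 i * y i) / n) (hr2 : r2 = (∑ i, x2 i * y i) / n)
    (hr12 : r12 = (∑ i, x1 i * x2 i) / n) (hr12lt : |r12| < 1)
    (lam2 : ℝ) (hlam2 : 0 < lam2)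
    (g : ℝ × ℝ → ℝ)
    (hg : ∀ b, g b = (2 * n : ℝ)⁻¹ * ∑ i, (y i - x1 i * b.1 - x2 i * b.2)^2
      + lam2 / 2 * (b.1^2 + b.2^2))
    (bR1 bR2 : ℝ)
    (hbR1 : bR1 = ((1 + lam2) * r1 - r12 * r2) / ((1 + lam2)^2 - r12^2))
    (hbR2 : bR2 = ((1 + lam2) * r2 - r12 * r1) / ((1 + lam2)^2 - r12^2))
    (bols1 bols2 : ℝ)
    (hbols1 : bols1 = (r1 - r12 * r2) / (1 - r12^2))
    (hbols2 : bols2 = (r2 - r12 * r1) / (1 - r12^2))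
    (wR clam : ℝ)
    (hwR : wR = lam2 / (1 + lam2 - r12^2))
    (hclam : clam = ((1 + lam2)^2 - (1 + lam2) * r12^2) / ((1 + lam2)^2 - r12^2)) :
    (∀ b, b ≠ (bR1, bR2) → g (bR1, bR2) < g b)
    ∧ (1 + lam2) * bR1 = clam * (1 - wR) * bols1 + clam * wR * r1
    ∧ (1 + lam2) * bR2 = clam * (1 - wR) * bols2 + clam * wR * r2 := by
  have hn₀ : (n : ℝ) ≠ 0 := Nat.cast_ne_zero.mpr hn.ne'
  obtain ⟨hlo, hhi⟩ := abs_lt.mp hr12lt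
  have h1 : 1 - r12 ^ 2 ≠ 0 := by nlinarith
  have h2 : 1 + lam2 - r12 ^ 2 ≠ 0 := by nlinarith
  have h3 : (1 + lam2) ^ 2 - r12 ^ 2 ≠ 0 := by nlinarith
  have hgq : g = symmQuadratic ((2 * n : ℝ)⁻¹ * ∑ i, y i ^ 2) r1 r2 (1 + lam2) r12 := by
    ext b
    simp only [hg, symmQuadratic, sum_sq_sub_two_mul, hx1, hx2, hr1, hr2, hr12]
    field_simp
    ring
  have ne1 : (1 + lam2) * bR1 + r12 * bR2 = r1 := hbR1 ▸ hbR2 ▸ cramer_symm_two_by_two h3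
  have ne2 : (1 + lam2) * bR2 + r12 * bR1 = r2 := hbR1 ▸ hbR2 ▸ cramer_symm_two_by_two h3
  refine ⟨fun b hb => hgq ▸ symmQuadratic_lt_of_ne (by linarith) ne1 ne2 hb, ?_, ?_⟩
  · subst bR1 bols1 wR clam
    exact ridge_rescaled_eq_weighted_average h1 h2
  · subst bR2 bols2 wR clam
    exact ridge_rescaled_eq_weighted_average h1 h2
end
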